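/- With p_j = p_j^min = (1 − 2^{(a_j−R_j)/B})(Q + σ²/h_j) for j ≠ k and p_k = Q − ∑_{j≠k} p_j^min, the index k maximizing the resulting sum-rate is k = argmin_{j} 2^{(a_j−R_j)/B}·(Q + σ²/h_j); equivalently, argmax_j (P−p_0−∑_i p_i^min)/(∑_i p_i^min + σ²/h_j − p_j^min) = argmin_j (σ²/h_j − p_j^min). -/

import Mathlib

open Real Finset

/-- Minimum private power of user `j` (eq. (14)). -/
noncomputable def pmin (Q σ2 B : ℝ) (h a R : ℕ → ℝ) (j : ℕ) : ℝ :=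
  (1 - (2:ℝ) ^ ((a j - R j) / B)) * (Q + σ2 / h j)

/-- Sum of private rates when all the slack power is given to user `m`
and every other user gets its minimum power (eq. (D.1)). -/
noncomputable def slackRate (K : ℕ) (Q σ2 B : ℝ) (h a R : ℕ → ℝ) (m : ℕ) : ℝ :=
  (∑ j ∈ (Finset.range K).erase m,
      B * Real.logb 2 ((h j * Q + σ2) / (h j * (Q - pmin Q σ2 B h a R j) + σ2)))
    + B * Real.logb 2 ((h m * Q + σ2) /
        (h m * ∑ j ∈ (Finset.range K).erase m, pmin Q σ2 B h a R j + σ2))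

/-! With `cⱼ := 2^{(aⱼ-Rⱼ)/B}(Q + σ²/hⱼ) = Q + σ²/hⱼ - pminⱼ` and the slack `D := Q - ∑ pminⱼ > 0`,
every user `j` at minimum power contributes `B log₂((hⱼQ + σ²)/(hⱼcⱼ))`, and the user `m` receiving the
slack contributes that same term plus `B log₂(cₘ/(cₘ - D))`. Hence the sum-rate is a constant plus
`B log₂(cₘ/(cₘ - D))`, which is strictly decreasing in `cₘ > D`. -/

noncomputable def slackCost (Q σ2 B : ℝ) (h a R : ℕ → ℝ) (j : ℕ) : ℝ :=
  (2:ℝ) ^ ((a j - R j) / B) * (Q + σ2 / h j)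

lemma logb_div_sub_le_logb_div_sub_iff {b D x y : ℝ} (hb : 1 < b) (hD : 0 < D) (hx : D < x)
    (hy : D < y) : logb b (x / (x - D)) ≤ logb b (y / (y - D)) ↔ y ≤ x := by
  have hxD : 0 < x - D := by linarith
  have hyD : 0 < y - D := by linarith
  rw [logb_le_logb hb (div_pos (hD.trans hx) hxD) (div_pos (hD.trans hy) hyD),
    div_le_div_iff₀ hxD hyD]
  constructor <;> intro _ <;> nlinarith

section

variable {K : ℕ} {Q σ2 B : ℝ} {h a R : ℕ → ℝ} {j m : ℕ}

lemma slackCost_eq_sub_pmin :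
    slackCost Q σ2 B h a R j = Q + σ2 / h j - pmin Q σ2 B h a R j := by
  unfold slackCost pmin
  ring

lemma pmin_nonneg (hQ : 0 ≤ Q) (hσ2 : 0 ≤ σ2) (hB : 0 ≤ B) (hj : 0 ≤ h j) (haR : a j ≤ R j) :
    0 ≤ pmin Q σ2 B h a R j := by
  have hpow : (2:ℝ) ^ ((a j - R j) / B) ≤ 1 :=
    rpow_le_one_of_one_le_of_nonpos one_le_two
      (div_nonpos_of_nonpos_of_nonneg (sub_nonpos.mpr haR) hB)
  exact mul_nonneg (sub_nonneg.mpr hpow) (by positivity)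

lemma mul_sub_pmin_add_eq (hj : h j ≠ 0) :
    h j * (Q - pmin Q σ2 B h a R j) + σ2 = h j * slackCost Q σ2 B h a R j := by
  rw [slackCost_eq_sub_pmin]
  field_simp
  ring

lemma mul_sum_erase_pmin_add_eq (hm : m ∈ range K) (hh : h m ≠ 0) :
    h m * ∑ j ∈ (range K).erase m, pmin Q σ2 B h a R j + σ2 =
      h m * (slackCost Q σ2 B h a R m - (Q - ∑ j ∈ range K, pmin Q σ2 B h a R j)) := by
  rw [sum_erase_eq_sub hm, slackCost_eq_sub_pmin]
  field_simp
  ring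

lemma sub_sum_pmin_lt_slackCost (hm : m ∈ range K) (hh : 0 < h m) (hσ2 : 0 < σ2)
    (hpmin : ∀ j ∈ range K, 0 ≤ pmin Q σ2 B h a R j) :
    Q - ∑ j ∈ range K, pmin Q σ2 B h a R j < slackCost Q σ2 B h a R m := by
  have hrest : 0 ≤ ∑ j ∈ (range K).erase m, pmin Q σ2 B h a R j :=
    sum_nonneg fun j hj => hpmin j (mem_of_mem_erase hj)
  rw [sum_erase_eq_sub hm] at hrest
  rw [slackCost_eq_sub_pmin]
  linarith [div_pos hσ2 hh]

lemma slackRate_eq_sum_add (hm : m ∈ range K) (hh : h m ≠ 0) (hA : h m * Q + σ2 ≠ 0)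
    (hc : slackCost Q σ2 B h a R m ≠ 0)
    (hcD : slackCost Q σ2 B h a R m - (Q - ∑ j ∈ range K, pmin Q σ2 B h a R j) ≠ 0) :
    slackRate K Q σ2 B h a R m =
      ∑ j ∈ range K, B * logb 2 ((h j * Q + σ2) / (h j * (Q - pmin Q σ2 B h a R j) + σ2)) +
        B * logb 2 (slackCost Q σ2 B h a R m /
          (slackCost Q σ2 B h a R m - (Q - ∑ j ∈ range K, pmin Q σ2 B h a R j))) := by
  set c := slackCost Q σ2 B h a R m
  set D := Q - ∑ j ∈ range K, pmin Q σ2 B h a R j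
  have hsplit : (h m * Q + σ2) / (h m * (c - D)) =
      (h m * Q + σ2) / (h m * c) * (c / (c - D)) := by
    field_simp
  have hrate : slackRate K Q σ2 B h a R m =
      ∑ j ∈ (range K).erase m,
          B * logb 2 ((h j * Q + σ2) / (h j * (Q - pmin Q σ2 B h a R j) + σ2)) +
        B * logb 2 ((h m * Q + σ2) / (h m * (c - D))) := by
    rw [slackRate, mul_sum_erase_pmin_add_eq hm hh]
  rw [hrate, ← add_sum_erase _ _ hm, mul_sub_pmin_add_eq hh, hsplit,
    logb_mul (by positivity) (by positivity)]
  ring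

end

theorem stmt_8_general (K : ℕ) (Q σ2 B : ℝ) (hQ : 0 < Q) (hσ2 : 0 < σ2) (hB : 0 < B)
    (h a R : ℕ → ℝ) (hpos : ∀ j ∈ Finset.range K, 0 < h j)
    (haR : ∀ j ∈ Finset.range K, a j ≤ R j)
    (hfeas : ∑ j ∈ Finset.range K, pmin Q σ2 B h a R j < Q)
    (k : ℕ) (hk : k ∈ Finset.range K) :
    (∀ m ∈ Finset.range K,
        slackRate K Q σ2 B h a R m ≤ slackRate K Q σ2 B h a R k) ↔
      (∀ m ∈ Finset.range K,
        (2:ℝ) ^ ((a k - R k) / B) * (Q + σ2 / h k) ≤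
          (2:ℝ) ^ ((a m - R m) / B) * (Q + σ2 / h m)) := by
  set c := slackCost Q σ2 B h a R
  set D := Q - ∑ j ∈ range K, pmin Q σ2 B h a R j
  have hD : 0 < D := sub_pos.mpr hfeas
  have hpmin : ∀ j ∈ range K, 0 ≤ pmin Q σ2 B h a R j := fun j hj =>
    pmin_nonneg hQ.le hσ2.le hB.le (hpos j hj).le (haR j hj)
  have hDc : ∀ m ∈ range K, D < c m := fun m hm =>
    sub_sum_pmin_lt_slackCost hm (hpos m hm) hσ2 hpmin
  have hrate : ∀ m ∈ range K, slackRate K Q σ2 B h a R m =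
      ∑ j ∈ range K, B * logb 2 ((h j * Q + σ2) / (h j * (Q - pmin Q σ2 B h a R j) + σ2)) +
        B * logb 2 (c m / (c m - D)) := fun m hm =>
    slackRate_eq_sum_add hm (hpos m hm).ne' (by have := hpos m hm; positivity)
      (hD.trans (hDc m hm)).ne' (sub_pos.mpr (hDc m hm)).ne'
  refine forall₂_congr fun m hm => ?_
  rw [hrate m hm, hrate k hk, add_le_add_iff_left, mul_le_mul_iff_right₀ hB,
    logb_div_sub_le_logb_div_sub_iff one_lt_two hD (hDc m hm) (hDc k hk)]
  rfl

/-- Theorem 2: the user `k` receiving the slack power maximizes the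
sum-rate iff it minimizes `2^{(aⱼ−Rⱼ)/B}(Q + σ²/hⱼ)` (equivalently, minimizes
`σ²/hⱼ − pminⱼ`). -/
theorem stmt_8 (K : ℕ) (Q σ2 B : ℝ) (hQ : 0 < Q) (hσ2 : 0 < σ2) (hB : 0 < B)
    (h a R : ℕ → ℝ) (hpos : ∀ j ∈ Finset.range K, 0 < h j)
    (ha : ∀ j ∈ Finset.range K, 0 ≤ a j) (haR : ∀ j ∈ Finset.range K, a j ≤ R j)
    (hfeas : ∑ j ∈ Finset.range K, pmin Q σ2 B h a R j < Q)
    (k : ℕ) (hk : k ∈ Finset.range K) :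
    (∀ m ∈ Finset.range K,
        slackRate K Q σ2 B h a R m ≤ slackRate K Q σ2 B h a R k) ↔
      (∀ m ∈ Finset.range K,
        (2:ℝ) ^ ((a k - R k) / B) * (Q + σ2 / h k) ≤
          (2:ℝ) ^ ((a m - R m) / B) * (Q + σ2 / h m)) :=
  stmt_8_general K Q σ2 B hQ hσ2 hB h a R hpos haR hfeas k hk
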